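/- Smoothness-complexity error bound (Δ₂ ≤ B₂): In the Banach-space product setting, fix θ ∈ W and ε > 0; let x ∈ W, let x̂ be the vector of tilted conditional means, let d = (d_1,…,d_n) be bounded linear functionals with Σ_{i=1}^n ‖f_i(x) − d_i‖² ≤ ε²n, and let p_i = ∫_{W_i} z e^{d_i(z)} dμ_i / ∫_{W_i} e^{d_i(z)} dμ_i. Then |f(x̂) − f(p)| + |Σ_{i=1}^n d_i(x̂_i − p_i)| + |Σ_{i=1}^n ( d_i − f_i(x^{(i)}_{θ_i}) )(x̂_i − x_i)| ≤ 4( Σ_{i=1}^n b_i² + ε²n )^{1/2} ( M³ (Σ_{i=1}^n c_{ii}²)^{1/2} + M² n^{1/2} ε ) + Σ_{i=1}^n M² c_{ii} + M n ε. -/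

import Mathlib

open MeasureTheory Real

/-!
Each coordinate of `x̂` and of `p` is the mean of an exponential tilt of `μᵢ`, by
`z ↦ f(x^{(i)}_z)` and by `dᵢ` respectively. By the mean value theorem, with `cᵢᵢ` controlling how
`fᵢ` varies along the `i`-th coordinate, the two log-densities differ by a function whose
oscillation on `Wᵢ` is at most `(‖fᵢ(x) - dᵢ‖ + cᵢᵢ M) M`, and tilts whose log-densities differ by
oscillation `δ` have means within `δ M` of each other. The three terms are then bounded
coordinatewise (mean value theorem for the first, operator norms for the other two) and summed
with Cauchy–Schwarz and `∑ ‖fᵢ(x) - dᵢ‖² ≤ ε² n`.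
-/

/-- The `i`-th coordinate inclusion as a continuous linear map. -/
noncomputable def coordL {n : ℕ} (V : Fin n → Type*) [∀ i, NormedAddCommGroup (V i)]
    [∀ i, NormedSpace ℝ (V i)] (i : Fin n) : V i →L[ℝ] (∀ j, V j) :=
  { LinearMap.single ℝ V i with cont := continuous_single i }

/-- Partial Fréchet differential `f_i(x) : V_i → ℝ`. -/
noncomputable def partialD {n : ℕ} {V : Fin n → Type*} [∀ i, NormedAddCommGroup (V i)]
    [∀ i, NormedSpace ℝ (V i)] (f : (∀ j, V j) → ℝ) (x : ∀ j, V j) (i : Fin n) :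
    V i →L[ℝ] ℝ :=
  (fderiv ℝ f x).comp (coordL V i)

/-- The tilted conditional mean `x̂ᵢ` of the `i`-th coordinate under `e^f`. -/
noncomputable def tiltedCondMean {n : ℕ} {V : Fin n → Type*}
    [∀ i, NormedAddCommGroup (V i)] [∀ i, NormedSpace ℝ (V i)]
    [∀ i, MeasurableSpace (V i)]
    (μ : ∀ i, Measure (V i)) (f : (∀ j, V j) → ℝ) (x : ∀ j, V j) (i : Fin n) : V i :=
  (∫ z, Real.exp (f (Function.update x i z)) ∂(μ i))⁻¹ •
    ∫ z, Real.exp (f (Function.update x i z)) • z ∂(μ i)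

/-- The mean of the exponential tilt of `μ` by a bounded linear functional `d`. -/
noncomputable def tiltMean {E : Type*} [NormedAddCommGroup E] [NormedSpace ℝ E]
    [MeasurableSpace E] (μ : Measure E) (d : E →L[ℝ] ℝ) : E :=
  (∫ z, Real.exp (d z) ∂μ)⁻¹ • ∫ z, Real.exp (d z) • z ∂μ

theorem Continuous.integrable_of_ae_mem_compact {X F : Type*} [TopologicalSpace X] [T2Space X]
    [MeasurableSpace X] [OpensMeasurableSpace X] [NormedAddCommGroup F] {μ : Measure X}
    [IsFiniteMeasure μ] {K : Set X} {φ : X → F} (hφ : Continuous φ) (hK : IsCompact K)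
    (hμK : ∀ᵐ z ∂μ, z ∈ K) : Integrable φ μ := by
  have hφK : IntegrableOn φ K μ := hφ.continuousOn.integrableOn_compact hK
  rwa [IntegrableOn, Measure.restrict_eq_self_of_ae_mem hμK] at hφK

theorem exp_sub_exp_add_le {a b m δ : ℝ} (h : a - b - m ≤ δ) :
    exp a - exp (m + b) ≤ δ * exp a := by
  have hshift : exp (m + b) = exp a * exp (m + b - a) := by rw [← exp_add]; ring_nf
  nlinarith [add_one_le_exp (m + b - a), exp_pos a]

section GibbsMean

variable {E : Type*} [NormedAddCommGroup E] [NormedSpace ℝ E] [MeasurableSpace E]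
  {μ : Measure E} {K : Set E} {g h : E → ℝ}

noncomputable def gibbsMean (μ : Measure E) (g : E → ℝ) : E :=
  (∫ z, exp (g z) ∂μ)⁻¹ • ∫ z, exp (g z) • z ∂μ

theorem gibbsMean_eq_integral_tilted (μ : Measure E) (g : E → ℝ) :
    gibbsMean μ g = ∫ z, z ∂(μ.tilted g) := by
  simp_rw [integral_tilted, div_eq_inv_mul, mul_smul, integral_smul, gibbsMean]

variable [CompleteSpace E]

theorem gibbsMean_mem [BorelSpace E] [IsProbabilityMeasure μ] (hK : IsCompact K)
    (hKconv : Convex ℝ K) (hμK : ∀ᵐ z ∂μ, z ∈ K) (hg : Continuous g) :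
    gibbsMean μ g ∈ K := by
  have hexp : Integrable (fun z => exp (g z)) μ := hg.rexp.integrable_of_ae_mem_compact hK hμK
  have := isProbabilityMeasure_tilted hexp
  rw [gibbsMean_eq_integral_tilted]
  refine hKconv.integral_mem hK.isClosed ((tilted_absolutelyContinuous μ g).ae_le hμK) ?_
  exact (integrable_tilted_iff hexp _).2
    ((hg.rexp.smul continuous_id).integrable_of_ae_mem_compact hK hμK)

theorem integral_exp_smul_sub (hexp : Integrable (fun z => exp (g z)) μ)
    (hexp_smul : Integrable (fun z => exp (g z) • z) μ) (p : E) :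
    ∫ z, exp (g z) • (z - p) ∂μ = ∫ z, exp (g z) • z ∂μ - (∫ z, exp (g z) ∂μ) • p := by
  simp_rw [smul_sub]
  rw [integral_sub hexp_smul (hexp.smul_const p), integral_smul_const]

theorem gibbsMean_sub (hexp : Integrable (fun z => exp (g z)) μ)
    (hexp_smul : Integrable (fun z => exp (g z) • z) μ) (hZ : ∫ z, exp (g z) ∂μ ≠ 0) (p : E) :
    gibbsMean μ g - p = (∫ z, exp (g z) ∂μ)⁻¹ • ∫ z, exp (g z) • (z - p) ∂μ := by
  rw [integral_exp_smul_sub hexp hexp_smul, smul_sub, inv_smul_smul₀ hZ, gibbsMean]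

theorem integral_exp_smul_sub_gibbsMean (hexp : Integrable (fun z => exp (g z)) μ)
    (hexp_smul : Integrable (fun z => exp (g z) • z) μ) (hZ : ∫ z, exp (g z) ∂μ ≠ 0) :
    ∫ z, exp (g z) • (z - gibbsMean μ g) ∂μ = 0 := by
  rw [integral_exp_smul_sub hexp hexp_smul, gibbsMean, smul_inv_smul₀ hZ, sub_self]

theorem norm_gibbsMean_sub_le [BorelSpace E] [IsProbabilityMeasure μ] (hK : IsCompact K)
    (hKconv : Convex ℝ K) (hμK : ∀ᵐ z ∂μ, z ∈ K) (hg : Continuous g) (hh : Continuous h)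
    {δ M : ℝ} (hdiam : ∀ z ∈ K, ∀ z' ∈ K, ‖z - z'‖ ≤ M)
    (hosc : ∀ z ∈ K, ∀ z' ∈ K, (g z - h z) - (g z' - h z') ≤ δ) :
    ‖gibbsMean μ g - gibbsMean μ h‖ ≤ δ * M := by
  have hint : ∀ {φ : E → E}, Continuous φ → Integrable φ μ :=
    fun hφ => hφ.integrable_of_ae_mem_compact hK hμK
  have hint_exp : ∀ {φ : E → ℝ}, Continuous φ → Integrable (fun z => exp (φ z)) μ :=
    fun hφ => hφ.rexp.integrable_of_ae_mem_compact hK hμK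
  -- Shifting `h` by `m = min_K (g - h)` does not move its mean `p`, and makes the weights
  -- satisfy `0 ≤ e^g - e^(m + h) ≤ δ e^g` on `K`.
  obtain ⟨z₀, hz₀, hmin⟩ := hK.exists_isMinOn hμK.exists (hg.sub hh).continuousOn
  set m := g z₀ - h z₀
  set p := gibbsMean μ h
  have hp : p ∈ K := gibbsMean_mem hK hKconv hμK hh
  have hZg : 0 < ∫ z, exp (g z) ∂μ := integral_exp_pos (hint_exp hg)
  have hZh : 0 < ∫ z, exp (h z) ∂μ := integral_exp_pos (hint_exp hh)
  have hshift : ∫ z, exp (m + h z) • (z - p) ∂μ = 0 := by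
    simp_rw [exp_add, mul_smul]
    rw [integral_smul, integral_exp_smul_sub_gibbsMean (hint_exp hh)
      (hint (hh.rexp.smul continuous_id)) hZh.ne', smul_zero]
  have hpt : ∀ᵐ z ∂μ, ‖(exp (g z) - exp (m + h z)) • (z - p)‖ ≤ δ * M * exp (g z) := by
    filter_upwards [hμK] with z hz
    have hmz : m ≤ g z - h z := hmin hz
    have hlow : 0 ≤ exp (g z) - exp (m + h z) := sub_nonneg.2 (exp_le_exp.2 (by linarith))
    have hup := exp_sub_exp_add_le (hosc z hz z₀ hz₀)
    rw [norm_smul, norm_of_nonneg hlow]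
    nlinarith [hdiam z hz p hp, norm_nonneg (z - p)]
  have hgp : Integrable (fun z => exp (g z) • (z - p)) μ := hint (by fun_prop)
  have hhp : Integrable (fun z => exp (m + h z) • (z - p)) μ := hint (by fun_prop)
  calc ‖gibbsMean μ g - p‖
      = (∫ z, exp (g z) ∂μ)⁻¹ * ‖∫ z, (exp (g z) - exp (m + h z)) • (z - p) ∂μ‖ := by
        simp_rw [sub_smul]
        rw [integral_sub hgp hhp, hshift, sub_zero,
          gibbsMean_sub (hint_exp hg) (hint (hg.rexp.smul continuous_id)) hZg.ne', norm_smul,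
          norm_inv, norm_of_nonneg hZg.le]
    _ ≤ (∫ z, exp (g z) ∂μ)⁻¹ * ∫ z, δ * M * exp (g z) ∂μ := by
        gcongr
        exact norm_integral_le_of_norm_le ((hint_exp hg).const_mul _) hpt
    _ = δ * M := by rw [integral_const_mul]; field_simp

end GibbsMean

theorem Convex.abs_sub_le_of_abs_fderiv_apply_le {E : Type*} [NormedAddCommGroup E]
    [NormedSpace ℝ E] {S : Set E} (hS : Convex ℝ S) {g : E → ℝ} (hg : Differentiable ℝ g)
    {a b : E} (ha : a ∈ S) (hb : b ∈ S) {C : ℝ}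
    (hC : ∀ y ∈ S, |fderiv ℝ g y (b - a)| ≤ C) : |g b - g a| ≤ C := by
  have hderiv : ∀ t : ℝ, HasDerivAt (fun t : ℝ => g (a + t • (b - a)))
      (fderiv ℝ g (a + t • (b - a)) (b - a)) t := fun t =>
    (hg _).hasFDerivAt.comp_hasDerivAt t (((hasDerivAt_id t).smul_const (b - a)).const_add a
      |>.congr_deriv (one_smul ℝ _))
  simpa using norm_image_sub_le_of_norm_deriv_le_segment_01'
    (fun t _ => (hderiv t).hasDerivWithinAt)
    (fun t ht => hC _ (hS.add_smul_sub_mem ha hb ⟨ht.1, ht.2.le⟩))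

theorem update_sub_eq_single {ι : Type*} [DecidableEq ι] {G : ι → Type*} [∀ i, AddGroup (G i)]
    (x : ∀ j, G j) (i : ι) (y : G i) : Function.update x i y - x = Pi.single i (y - x i) := by
  ext j
  rcases eq_or_ne j i with rfl | hj <;> simp [*]

section Coordinates

variable {n : ℕ} {V : Fin n → Type*} [∀ i, NormedAddCommGroup (V i)]
  [∀ i, NormedSpace ℝ (V i)] {f : (∀ j, V j) → ℝ} {W : ∀ i, Set (V i)}

theorem partialD_apply (f : (∀ j, V j) → ℝ) (x : ∀ j, V j) (i : Fin n) (v : V i) :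
    partialD f x i v = fderiv ℝ f x (Pi.single i v) := rfl

theorem fderiv_apply_eq_sum_partialD (f : (∀ j, V j) → ℝ) (x w : ∀ j, V j) :
    fderiv ℝ f x w = ∑ i, partialD f x i (w i) := by
  conv_lhs => rw [← Finset.univ_sum_single w]
  simp only [map_sum, partialD_apply]

theorem coordL_eq_pi (i : Fin n) : coordL V i = .pi (Pi.single i (.id ℝ (V i))) := by
  ext z j
  change Pi.single i z j = _
  rcases eq_or_ne j i with rfl | hj <;> simp [*]

theorem hasFDerivAt_comp_update (hf : Differentiable ℝ f) (x : ∀ j, V j) (i : Fin n)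
    (w : V i) :
    HasFDerivAt (fun z => f (Function.update x i z)) (partialD f (Function.update x i w) i) w := by
  have hupdate : HasFDerivAt (Function.update x i) (coordL V i) w := by
    rw [coordL_eq_pi]; exact hasFDerivAt_update x w
  exact (hf _).hasFDerivAt.comp w hupdate

theorem abs_sum_apply_le_sum_mul (L : ∀ i, V i →L[ℝ] ℝ) (v : ∀ i, V i) {A B : Fin n → ℝ}
    (hL : ∀ i, ‖L i‖ ≤ A i) (hv : ∀ i, ‖v i‖ ≤ B i) : |∑ i, L i (v i)| ≤ ∑ i, A i * B i :=
  (Finset.abs_sum_le_sum_abs _ _).trans <| Finset.sum_le_sum fun i _ =>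
    ((L i).le_opNorm (v i)).trans <|
      mul_le_mul (hL i) (hv i) (norm_nonneg _) ((norm_nonneg _).trans (hL i))

theorem abs_sub_le_sum_mul_norm_sub (hW : ∀ i, Convex ℝ (W i)) (hf : Differentiable ℝ f)
    {b : Fin n → ℝ} (hb : ∀ y ∈ Set.univ.pi W, ∀ i, ‖partialD f y i‖ ≤ b i)
    {u v : ∀ j, V j} (hu : u ∈ Set.univ.pi W) (hv : v ∈ Set.univ.pi W) :
    |f u - f v| ≤ ∑ i, b i * ‖u i - v i‖ :=
  (convex_pi fun i _ => hW i).abs_sub_le_of_abs_fderiv_apply_le hf hv hu fun y hy => by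
    rw [fderiv_apply_eq_sum_partialD]
    exact abs_sum_apply_le_sum_mul _ _ (hb y hy) fun i => le_rfl

theorem norm_partialD_update_sub_le (hW : ∀ i, Convex ℝ (W i))
    (hf2 : Differentiable ℝ (fderiv ℝ f)) {i : Fin n} {C : ℝ} (hC : 0 ≤ C)
    (hc : ∀ y ∈ Set.univ.pi W, ∀ z r : V i,
      |fderiv ℝ (fun y => fderiv ℝ f y (Pi.single i z)) y (Pi.single i r)| ≤ C * ‖z‖ * ‖r‖)
    {x : ∀ j, V j} (hx : x ∈ Set.univ.pi W) {y : V i} (hy : y ∈ W i) :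
    ‖partialD f (Function.update x i y) i - partialD f x i‖ ≤ C * ‖y - x i‖ := by
  have hxy : Function.update x i y ∈ Set.univ.pi W :=
    Set.update_mem_pi_iff_of_mem hx |>.2 fun _ => hy
  refine ContinuousLinearMap.opNorm_le_bound _ (by positivity) fun v => ?_
  have hdiff : Differentiable ℝ fun y => fderiv ℝ f y (Pi.single i v) :=
    fun y => (hf2 y).clm_apply (differentiableAt_const _)
  have := (convex_pi fun j _ => hW j).abs_sub_le_of_abs_fderiv_apply_le hdiff hx hxy
    fun z hz => by rw [update_sub_eq_single]; exact hc z hz v (y - x i)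
  rw [Real.norm_eq_abs, sub_apply, partialD_apply, partialD_apply]
  linarith

theorem norm_partialD_update_sub_le_add (hW : ∀ i, Convex ℝ (W i))
    (hf2 : Differentiable ℝ (fderiv ℝ f)) {i : Fin n} {C M : ℝ} (hC : 0 ≤ C)
    (hc : ∀ y ∈ Set.univ.pi W, ∀ z r : V i,
      |fderiv ℝ (fun y => fderiv ℝ f y (Pi.single i z)) y (Pi.single i r)| ≤ C * ‖z‖ * ‖r‖)
    (hM : ∀ z ∈ W i, ∀ z' ∈ W i, ‖z - z'‖ ≤ M)
    {x : ∀ j, V j} (hx : x ∈ Set.univ.pi W) (d : V i →L[ℝ] ℝ) {y : V i} (hy : y ∈ W i) :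
    ‖partialD f (Function.update x i y) i - d‖ ≤ ‖partialD f x i - d‖ + C * M :=
  calc ‖partialD f (Function.update x i y) i - d‖
      = ‖(partialD f (Function.update x i y) i - partialD f x i) + (partialD f x i - d)‖ := by
        rw [sub_add_sub_cancel]
    _ ≤ C * ‖y - x i‖ + ‖partialD f x i - d‖ :=
        (norm_add_le _ _).trans <|
          add_le_add_left (norm_partialD_update_sub_le hW hf2 hC hc hx hy) _
    _ ≤ ‖partialD f x i - d‖ + C * M := by
        linarith [mul_le_mul_of_nonneg_left (hM y hy (x i) (hx i trivial)) hC]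

theorem comp_update_sub_sub_le (hW : ∀ i, Convex ℝ (W i)) (hf : Differentiable ℝ f)
    (hf2 : Differentiable ℝ (fderiv ℝ f)) {i : Fin n} {C M : ℝ} (hC : 0 ≤ C)
    (hc : ∀ y ∈ Set.univ.pi W, ∀ z r : V i,
      |fderiv ℝ (fun y => fderiv ℝ f y (Pi.single i z)) y (Pi.single i r)| ≤ C * ‖z‖ * ‖r‖)
    (hM : ∀ z ∈ W i, ∀ z' ∈ W i, ‖z - z'‖ ≤ M)
    {x : ∀ j, V j} (hx : x ∈ Set.univ.pi W) (d : V i →L[ℝ] ℝ) {z z' : V i}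
    (hz : z ∈ W i) (hz' : z' ∈ W i) :
    (f (Function.update x i z) - d z) - (f (Function.update x i z') - d z')
      ≤ (‖partialD f x i - d‖ + C * M) * M := by
  have hderiv : ∀ w, HasFDerivAt (fun z => f (Function.update x i z) - d z)
      (partialD f (Function.update x i w) i - d) w :=
    fun w => (hasFDerivAt_comp_update hf x i w).sub d.hasFDerivAt
  refine (le_abs_self _).trans <| (hW i).abs_sub_le_of_abs_fderiv_apply_le
    (fun w => (hderiv w).differentiableAt) hz' hz fun w hw => ?_
  rw [(hderiv w).fderiv, ← Real.norm_eq_abs]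
  have hM0 : 0 ≤ M := (norm_nonneg _).trans (hM z hz z hz)
  exact (ContinuousLinearMap.le_opNorm _ _).trans <|
    mul_le_mul (norm_partialD_update_sub_le_add hW hf2 hC hc hM hx d hw) (hM z hz z' hz')
      (norm_nonneg _) (by positivity)

end Coordinates

theorem sum_error_terms_le {n : ℕ} {b c e : Fin n → ℝ} {M ε : ℝ} (hM : 0 ≤ M) (hε : 0 ≤ ε)
    (he : ∑ i, e i ^ 2 ≤ ε ^ 2 * n) :
    ∑ i, b i * ((e i + c i * M) * M * M) + ∑ i, (b i + e i) * ((e i + c i * M) * M * M)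
        + ∑ i, (e i + c i * M) * M ≤
      4 * √(∑ i, b i ^ 2 + ε ^ 2 * n) * (M ^ 3 * √(∑ i, c i ^ 2) + M ^ 2 * √n * ε)
        + ∑ i, M ^ 2 * c i + M * n * ε := by
  set B := √(∑ i, b i ^ 2 + ε ^ 2 * n)
  set Sb := √(∑ i, b i ^ 2)
  set Sc := √(∑ i, c i ^ 2)
  set t := √(∑ i, e i ^ 2)
  have hεn : √(ε ^ 2 * n) = ε * √n := by rw [sqrt_mul (sq_nonneg ε), sqrt_sq hε]
  have ht : t ≤ ε * √n := hεn ▸ sqrt_le_sqrt he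
  have hSbB : Sb ≤ B := sqrt_le_sqrt (le_add_of_nonneg_right (by positivity))
  have htB : t ≤ B := ht.trans (hεn ▸ sqrt_le_sqrt (le_add_of_nonneg_left (by positivity)))
  have hCS := Real.sum_mul_le_sqrt_mul_sqrt (Finset.univ : Finset (Fin n))
  have hbe : 2 * ∑ i, b i * e i + ∑ i, e i * e i ≤ 3 * (B * (ε * √n)) := by
    have := mul_le_mul hSbB ht (sqrt_nonneg _) (sqrt_nonneg _)
    have := mul_le_mul htB ht (sqrt_nonneg _) (sqrt_nonneg _)
    linarith [hCS b e, hCS e e]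
  have hbc : 2 * ∑ i, b i * c i + ∑ i, e i * c i ≤ 3 * (B * Sc) := by
    have := mul_le_mul_of_nonneg_right hSbB (sqrt_nonneg (∑ i, c i ^ 2))
    have := mul_le_mul_of_nonneg_right htB (sqrt_nonneg (∑ i, c i ^ 2))
    linarith [hCS b c, hCS e c]
  have hsum_e : ∑ i, e i ≤ ε * n := by
    have := hCS e 1
    simp only [Pi.one_apply, mul_one, one_pow, Finset.sum_const, Finset.card_univ,
      Fintype.card_fin, nsmul_eq_mul] at this
    nlinarith [mul_self_sqrt (Nat.cast_nonneg (α := ℝ) n), sqrt_nonneg (n : ℝ)]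
  have hB : 0 ≤ B * (M ^ 3 * Sc + M ^ 2 * √n * ε) := by positivity
  calc _ = M ^ 2 * (2 * ∑ i, b i * e i + ∑ i, e i * e i)
          + M ^ 3 * (2 * ∑ i, b i * c i + ∑ i, e i * c i) + M * ∑ i, e i
          + ∑ i, M ^ 2 * c i := by
        simp only [Finset.mul_sum, ← Finset.sum_add_distrib]
        exact Finset.sum_congr rfl fun i _ => by ring
    _ ≤ M ^ 2 * (3 * (B * (ε * √n))) + M ^ 3 * (3 * (B * Sc)) + M * (ε * n)
          + ∑ i, M ^ 2 * c i := by gcongr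
    _ ≤ _ := by linarith

theorem delta_two_le_B_two_general
    {n : ℕ} {V : Fin n → Type*}
    [∀ i, NormedAddCommGroup (V i)] [∀ i, NormedSpace ℝ (V i)]
    [∀ i, CompleteSpace (V i)] [∀ i, MeasurableSpace (V i)] [∀ i, BorelSpace (V i)]
    (μ : ∀ i, Measure (V i)) [∀ i, IsProbabilityMeasure (μ i)]
    (W : ∀ i, Set (V i))
    (hWc : ∀ i, IsCompact (W i)) (hWconv : ∀ i, Convex ℝ (W i))
    (hμW : ∀ i, μ i (W i) = 1)
    (f : (∀ j, V j) → ℝ)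
    (hf1 : Differentiable ℝ f) (hf2 : Differentiable ℝ (fderiv ℝ f))
    (b : Fin n → ℝ)
    (hb : ∀ x ∈ Set.univ.pi W, ∀ i, ‖partialD f x i‖ ≤ b i)
    (c : Fin n → Fin n → ℝ) (hc_pos : ∀ i j, 0 < c i j)
    (hc : ∀ x ∈ Set.univ.pi W, ∀ (i j : Fin n) (zi : V i) (rj : V j),
      |fderiv ℝ (fun y => fderiv ℝ f y (Pi.single i zi)) x (Pi.single j rj)|
        ≤ c i j * ‖zi‖ * ‖rj‖)
    (M : ℝ)
    (hMW : ∀ i, ∀ z ∈ W i, ∀ z' ∈ W i, ‖z - z'‖ ≤ M)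
    (θ : ∀ j, V j) (hθ : θ ∈ Set.univ.pi W)
    (ε : ℝ) (hε : 0 < ε)
    (x : ∀ j, V j) (hx : x ∈ Set.univ.pi W)
    (d : ∀ i, V i →L[ℝ] ℝ)
    (hd : ∑ i, ‖partialD f x i - d i‖ ^ 2 ≤ ε ^ 2 * n) :
    |f (fun i => tiltedCondMean μ f x i) - f (fun i => tiltMean (μ i) (d i))|
      + |∑ i, d i (tiltedCondMean μ f x i - tiltMean (μ i) (d i))|
      + |∑ i, (d i - partialD f (Function.update x i (θ i)) i)
          (tiltedCondMean μ f x i - x i)| ≤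
      4 * Real.sqrt (∑ i, b i ^ 2 + ε ^ 2 * n)
          * (M ^ 3 * Real.sqrt (∑ i, c i i ^ 2) + M ^ 2 * Real.sqrt n * ε)
        + ∑ i, M ^ 2 * c i i + M * n * ε := by
  obtain rfl | hn := eq_or_ne n 0
  · simp [Subsingleton.elim (fun i => tiltedCondMean μ f x i) fun i => tiltMean (μ i) (d i)]
  have hM : 0 ≤ M := (norm_nonneg _).trans <|
    hMW ⟨0, Nat.pos_of_ne_zero hn⟩ _ (hx _ trivial) _ (hx _ trivial)
  have hμW' : ∀ i, ∀ᵐ z ∂(μ i), z ∈ W i := fun i =>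
    (mem_ae_iff_prob_eq_one (hWc i).measurableSet).2 (hμW i)
  have hcont : ∀ i, Continuous fun z => f (Function.update x i z) := fun i =>
    hf1.continuous.comp (continuous_const.update i continuous_id)
  -- `tiltedCondMean μ f x i` and `tiltMean (μ i) (d i)` unfold to `gibbsMean (μ i)` of
  -- `z ↦ f (x^{(i)}_z)` and of `d i`.
  have hxhat : ∀ i, tiltedCondMean μ f x i ∈ W i := fun i =>
    gibbsMean_mem (hWc i) (hWconv i) (hμW' i) (hcont i)
  have hp : ∀ i, tiltMean (μ i) (d i) ∈ W i := fun i =>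
    gibbsMean_mem (hWc i) (hWconv i) (hμW' i) (d i).continuous
  set e := fun i => ‖partialD f x i - d i‖
  have hmean : ∀ i, ‖tiltedCondMean μ f x i - tiltMean (μ i) (d i)‖
      ≤ (e i + c i i * M) * M * M := fun i =>
    norm_gibbsMean_sub_le (hWc i) (hWconv i) (hμW' i) (hcont i) (d i).continuous (hMW i)
      fun z hz z' hz' => comp_update_sub_sub_le hWconv hf1 hf2 (hc_pos i i).le
        (fun y hy => hc y hy i i) (hMW i) hx (d i) hz hz'
  have hterm1 : |f (fun i => tiltedCondMean μ f x i) - f (fun i => tiltMean (μ i) (d i))|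
      ≤ ∑ i, b i * ((e i + c i i * M) * M * M) :=
    (abs_sub_le_sum_mul_norm_sub hWconv hf1 hb (fun i _ => hxhat i) (fun i _ => hp i)).trans <|
      Finset.sum_le_sum fun i _ =>
        mul_le_mul_of_nonneg_left (hmean i) ((norm_nonneg _).trans (hb x hx i))
  have hterm2 : |∑ i, d i (tiltedCondMean μ f x i - tiltMean (μ i) (d i))|
      ≤ ∑ i, (b i + e i) * ((e i + c i i * M) * M * M) :=
    abs_sum_apply_le_sum_mul _ _
      (fun i => (norm_le_norm_add_norm_sub _ _).trans (add_le_add_left (hb x hx i) _)) hmean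
  have hterm3 : |∑ i, (d i - partialD f (Function.update x i (θ i)) i)
      (tiltedCondMean μ f x i - x i)| ≤ ∑ i, (e i + c i i * M) * M :=
    abs_sum_apply_le_sum_mul _ _
      (fun i => (norm_sub_rev _ _).trans_le <| norm_partialD_update_sub_le_add hWconv hf2
        (hc_pos i i).le (fun y hy => hc y hy i i) (hMW i) hx (d i) (hθ i trivial))
      (fun i => hMW i _ (hxhat i) _ (hx i trivial))
  linarith [sum_error_terms_le (b := b) (c := fun i => c i i) hM hε.le hd]

/-- **Smoothness-complexity error bound (`Δ₂ ≤ B₂`).** For `x ∈ W`, functionals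
`d = (d₁,…,dₙ)` with `∑ ‖f_i(x) - d i‖² ≤ ε² n` and tilted means `p i`,
`|f(x̂) - f(p)| + |∑ d i (x̂ᵢ - pᵢ)| + |∑ (d i - f_i(x^{(i)}_{θᵢ}))(x̂ᵢ - xᵢ)| ≤ B₂`. -/
theorem delta_two_le_B_two
    {n : ℕ} {V : Fin n → Type*}
    [∀ i, NormedAddCommGroup (V i)] [∀ i, NormedSpace ℝ (V i)]
    [∀ i, CompleteSpace (V i)] [∀ i, MeasurableSpace (V i)] [∀ i, BorelSpace (V i)]
    (μ : ∀ i, Measure (V i)) [∀ i, IsProbabilityMeasure (μ i)]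
    (W : ∀ i, Set (V i))
    (hWc : ∀ i, IsCompact (W i)) (hWconv : ∀ i, Convex ℝ (W i))
    (hμW : ∀ i, μ i (W i) = 1)
    (f : (∀ j, V j) → ℝ)
    (hf1 : Differentiable ℝ f) (hf2 : Differentiable ℝ (fderiv ℝ f))
    (b : Fin n → ℝ) (hb_pos : ∀ i, 0 < b i)
    (hb : ∀ x ∈ Set.univ.pi W, ∀ i, ‖partialD f x i‖ ≤ b i)
    (c : Fin n → Fin n → ℝ) (hc_pos : ∀ i j, 0 < c i j)
    (hc : ∀ x ∈ Set.univ.pi W, ∀ (i j : Fin n) (zi : V i) (rj : V j),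
      |fderiv ℝ (fun y => fderiv ℝ f y (Pi.single i zi)) x (Pi.single j rj)|
        ≤ c i j * ‖zi‖ * ‖rj‖)
    (M : ℝ) (hM : 0 < M)
    (hMW : ∀ i, ∀ z ∈ W i, ∀ z' ∈ W i, ‖z - z'‖ ≤ M)
    (θ : ∀ j, V j) (hθ : θ ∈ Set.univ.pi W)
    (ε : ℝ) (hε : 0 < ε)
    (x : ∀ j, V j) (hx : x ∈ Set.univ.pi W)
    (d : ∀ i, V i →L[ℝ] ℝ)
    (hd : ∑ i, ‖partialD f x i - d i‖ ^ 2 ≤ ε ^ 2 * n) :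
    |f (fun i => tiltedCondMean μ f x i) - f (fun i => tiltMean (μ i) (d i))|
      + |∑ i, d i (tiltedCondMean μ f x i - tiltMean (μ i) (d i))|
      + |∑ i, (d i - partialD f (Function.update x i (θ i)) i)
          (tiltedCondMean μ f x i - x i)| ≤
      4 * Real.sqrt (∑ i, b i ^ 2 + ε ^ 2 * n)
          * (M ^ 3 * Real.sqrt (∑ i, c i i ^ 2) + M ^ 2 * Real.sqrt n * ε)
        + ∑ i, M ^ 2 * c i i + M * n * ε :=
  delta_two_le_B_two_general μ W hWc hWconv hμW f hf1 hf2 b hb c hc_pos hc M hMW θ hθ ε hε x hx d hd
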